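/- The following two statements are equivalent: (1) for every integer n > 1, |𝒜(n)| ≤ 3; (2) for all integers k₁ > k₂ ≥ 3, the chains 𝔠_{k₁} and 𝔠_{k₂} share no integer, i.e., there are no indices i, j ≥ 2 with G_i(k₁) = G_j(k₂). -/
import Mathlib


/-- Fibonacci-like polynomials evaluated at an integer:
`G 0 k = 1`, `G 1 k = k`, `G (i+2) k = k * G (i+1) k - G i k`. -/
def G : ℕ → ℤ → ℤ
  | 0, _ => 1
  | 1, k => k
  | (i + 2), k => k * G (i + 1) k - G i k

/-- `A n = {a : 1 ≤ a < n, n ∣ a² − 1, a ∣ n² − 1}`. -/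
def A (n : ℕ) : Finset ℕ :=
  (Finset.Ico 1 n).filter (fun a => (n : ℤ) ∣ (a : ℤ) ^ 2 - 1 ∧ (a : ℤ) ∣ (n : ℤ) ^ 2 - 1)

lemma G_zero (k : ℤ) : G 0 k = 1 := rfl
lemma G_one (k : ℤ) : G 1 k = k := rfl
lemma G_add_two (i : ℕ) (k : ℤ) : G (i+2) k = k * G (i+1) k - G i k := rfl

lemma G_quad (k : ℤ) (i : ℕ) :
    G i k ^ 2 + G (i+1) k ^ 2 - k * G i k * G (i+1) k = 1 := by
  induction i with
  | zero => simp [G_zero, G_one]; ring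
  | succ i ih =>
    rw [show i+1+1 = i+2 from rfl, G_add_two]
    linear_combination ih

lemma G_pos_lt (k : ℤ) (hk : 3 ≤ k) (i : ℕ) : 1 ≤ G i k ∧ G i k < G (i+1) k := by
  induction i with
  | zero => exact ⟨le_refl _, show (1:ℤ) < k by linarith⟩
  | succ i ih =>
    obtain ⟨h1, h2⟩ := ih
    refine ⟨by linarith, ?_⟩
    rw [show i+1+1 = i+2 from rfl, G_add_two]
    nlinarith [mul_nonneg (by linarith : (0:ℤ) ≤ k - 3) (by linarith : (0:ℤ) ≤ G (i+1) k)]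

lemma G_ge_k (k : ℤ) (hk : 3 ≤ k) (i : ℕ) : k ≤ G (i+1) k := by
  induction i with
  | zero => simp [G_one]
  | succ i ih =>
    have h := (G_pos_lt k hk (i+1)).2
    linarith

lemma G_gap (k : ℤ) (hk : 3 ≤ k) (i : ℕ) : 2 * G (i+1) k + 1 ≤ G (i+2) k := by
  have h1 := G_pos_lt k hk i
  have h2 := (G_pos_lt k hk (i+1)).1
  rw [G_add_two]
  nlinarith [mul_nonneg (by linarith : (0:ℤ) ≤ k - 3) (by linarith [h1.1, h1.2] : (0:ℤ) ≤ G (i+1) k)]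

lemma descent (k : ℤ) (hk : 3 ≤ k) :
    ∀ N : ℕ, ∀ x y : ℤ, y.toNat ≤ N → 2 ≤ x → x < y → x^2 + y^2 - k*x*y = 1 →
      ∃ i : ℕ, x = G (i+1) k ∧ y = G (i+2) k := by
  intro N
  induction N with
  | zero => intro x y hN hx hxy _; exfalso; omega
  | succ N ih =>
    intro x y hN hx hxy heq
    set x' := k * x - y with hx'
    have key : x' * y = x^2 - 1 := by rw [hx']; linear_combination -heq
    have hypos : (0:ℤ) < y := by linarith
    have hx'pos : 1 ≤ x' := by
      by_contra h
      push_neg at h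
      have h0 : x' ≤ 0 := by omega
      have : x' * y ≤ 0 := mul_nonpos_of_nonpos_of_nonneg h0 (by linarith)
      nlinarith
    have hx'lt : x' < x := by
      by_contra h
      push_neg at h
      have h1 : x * y ≤ x' * y := mul_le_mul_of_nonneg_right h (by linarith)
      have h2 : x * (x+1) ≤ x * y := mul_le_mul_of_nonneg_left hxy (by linarith)
      nlinarith
    have heq' : x'^2 + x^2 - k * x' * x = 1 := by
      rw [hx']; linear_combination heq
    rcases eq_or_lt_of_le hx'pos with h1 | h2
    · -- x' = 1, so x = k
      rw [← h1] at heq'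
      have hx0 : x * (x - k) = 0 := by linear_combination heq'
      have hxk : x = k := by
        rcases mul_eq_zero.mp hx0 with h | h
        · omega
        · linarith
      refine ⟨0, ?_, ?_⟩
      · rw [show (0:ℕ)+1 = 1 from rfl, G_one, hxk]
      · have hy : y = k * x - x' := by rw [hx']; ring
        rw [hy, ← h1, hxk, show (0:ℕ)+2 = 2 from rfl, G_add_two 0, G_one, G_zero]
    · obtain ⟨i, hi1, hi2⟩ := ih x' x (by omega) (by omega) hx'lt heq'
      refine ⟨i+1, by rw [show i+1+1 = i+2 from rfl]; exact hi2, ?_⟩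
      rw [show i+1+2 = (i+1)+2 from rfl, G_add_two (i+1),
        show i+1+1 = i+2 from rfl, ← hi1, ← hi2]
      linarith [hx']

lemma mem_A_of_eq (n : ℕ) (a k : ℤ) (ha : 2 ≤ a) (hn : a < (n:ℤ))
    (heq : a^2 + (n:ℤ)^2 - k*a*(n:ℤ) = 1) : a.toNat ∈ A n := by
  have h0 : (a.toNat : ℤ) = a := Int.toNat_of_nonneg (by linarith)
  simp only [A, Finset.mem_filter, Finset.mem_Ico]
  refine ⟨⟨by omega, by omega⟩, ⟨k*a - n, ?_⟩, ⟨k*n - a, ?_⟩⟩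
  · rw [h0]; linear_combination heq
  · rw [h0]; linear_combination heq

/-- Key extraction: nontrivial elements of `A n` come from chains. -/
lemma extract (n a : ℕ) (ha : a ∈ A n) (h1 : a ≠ 1) (h2 : a ≠ n - 1) :
    ∃ k : ℤ, 3 ≤ k ∧ (a:ℤ)^2 + (n:ℤ)^2 - k*(a:ℤ)*(n:ℤ) = 1 ∧
      ∃ i : ℕ, (a:ℤ) = G (i+1) k ∧ (n:ℤ) = G (i+2) k := by
  simp only [A, Finset.mem_filter, Finset.mem_Ico] at ha
  obtain ⟨⟨ha1, ha2⟩, ⟨q, hq⟩, ⟨r, hr⟩⟩ := ha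
  have hx2 : 2 ≤ (a:ℤ) := by omega
  have hxN : (a:ℤ) ≤ (n:ℤ) - 2 := by omega
  have cop : IsCoprime (a:ℤ) (n:ℤ) := ⟨(a:ℤ), -q, by linear_combination hq⟩
  have d1 : (a:ℤ) ∣ (a:ℤ)^2 + (n:ℤ)^2 - 1 := ⟨(a:ℤ) + r, by linear_combination hr⟩
  have d2 : (n:ℤ) ∣ (a:ℤ)^2 + (n:ℤ)^2 - 1 := ⟨q + (n:ℤ), by linear_combination hq⟩
  obtain ⟨k, hk⟩ := cop.mul_dvd d1 d2
  have hk3 : 3 ≤ k := by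
    by_contra h
    push_neg at h
    have hpos : (0:ℤ) ≤ (a:ℤ) * (n:ℤ) := by positivity
    have : (a:ℤ) * (n:ℤ) * k ≤ (a:ℤ) * (n:ℤ) * 2 := by
      apply mul_le_mul_of_nonneg_left (by omega) hpos
    nlinarith [mul_self_nonneg ((n:ℤ) - (a:ℤ) - 2)]
  have heq : (a:ℤ)^2 + (n:ℤ)^2 - k*(a:ℤ)*(n:ℤ) = 1 := by linear_combination hk
  obtain ⟨i, hi⟩ := descent k hk3 (n:ℤ).toNat (a:ℤ) (n:ℤ) le_rfl hx2 (by omega) heq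
  exact ⟨k, hk3, heq, i, hi⟩

theorem stmt_8 :
    (∀ n : ℕ, 1 < n → (A n).card ≤ 3) ↔
      (∀ k₁ k₂ : ℤ, 3 ≤ k₂ → k₂ < k₁ →
        ∀ i j : ℕ, 2 ≤ i → 2 ≤ j → G i k₁ ≠ G j k₂) := by
  constructor
  · intro h1 k₁ k₂ hk₂ hlt i j hi hj heq
    obtain ⟨i', rfl⟩ : ∃ i', i = i' + 2 := ⟨i - 2, by omega⟩
    obtain ⟨j', rfl⟩ : ∃ j', j = j' + 2 := ⟨j - 2, by omega⟩
    have hk₁ : 3 ≤ k₁ := by linarith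
    set a₁ := G (i'+1) k₁ with ha₁
    set a₂ := G (j'+1) k₂ with ha₂
    set N := G (i'+2) k₁ with hNdef
    have e1 : a₁^2 + N^2 - k₁*a₁*N = 1 := G_quad k₁ (i'+1)
    have e2 : a₂^2 + N^2 - k₂*a₂*N = 1 := by
      rw [heq]; exact G_quad k₂ (j'+1)
    have b1 : 3 ≤ a₁ := le_trans hk₁ (G_ge_k k₁ hk₁ i')
    have b2 : 3 ≤ a₂ := le_trans hk₂ (G_ge_k k₂ hk₂ j')
    have g1 : 2*a₁ + 1 ≤ N := G_gap k₁ hk₁ i'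
    have g2 : 2*a₂ + 1 ≤ N := by rw [heq]; exact G_gap k₂ hk₂ j'
    clear_value a₁ a₂ N
    set n := N.toNat with hnd
    have hNn : (n:ℤ) = N := Int.toNat_of_nonneg (by linarith)
    have hane : a₁ ≠ a₂ := by
      intro h
      rw [h] at e1
      have h0 : (k₁ - k₂) * (a₂ * N) = 0 := by linear_combination e2 - e1
      rcases mul_eq_zero.mp h0 with h' | h'
      · linarith
      · nlinarith
    have m1 : a₁.toNat ∈ A n := mem_A_of_eq n a₁ k₁ (by linarith) (by omega) (by rw [hNn]; exact e1)
    have m2 : a₂.toNat ∈ A n := mem_A_of_eq n a₂ k₂ (by linarith) (by omega) (by rw [hNn]; exact e2)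
    have hn7 : 7 ≤ n := by omega
    have mone : 1 ∈ A n := by
      simp only [A, Finset.mem_filter, Finset.mem_Ico]
      refine ⟨⟨le_refl _, by omega⟩, ⟨0, by ring⟩, ⟨(n:ℤ)^2 - 1, by ring⟩⟩
    have mtop : (n-1) ∈ A n := by
      simp only [A, Finset.mem_filter, Finset.mem_Ico]
      have hc : ((n-1 : ℕ):ℤ) = (n:ℤ) - 1 := by omega
      refine ⟨⟨by omega, by omega⟩, ⟨(n:ℤ) - 2, ?_⟩, ⟨(n:ℤ) + 1, ?_⟩⟩
      · rw [hc]; ring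
      · rw [hc]; ring
    have hss : ({1, a₁.toNat, a₂.toNat, n-1} : Finset ℕ) ⊆ A n := by
      intro x hx
      simp only [Finset.mem_insert, Finset.mem_singleton] at hx
      rcases hx with rfl | rfl | rfl | rfl
      · exact mone
      · exact m1
      · exact m2
      · exact mtop
    have hcard : ({1, a₁.toNat, a₂.toNat, n-1} : Finset ℕ).card = 4 := by
      have d1 : (1:ℕ) ∉ ({a₁.toNat, a₂.toNat, n-1} : Finset ℕ) := by
        simp only [Finset.mem_insert, Finset.mem_singleton]; omega
      have d2 : a₁.toNat ∉ ({a₂.toNat, n-1} : Finset ℕ) := by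
        simp only [Finset.mem_insert, Finset.mem_singleton]; omega
      have d3 : a₂.toNat ∉ ({n-1} : Finset ℕ) := by
        simp only [Finset.mem_singleton]; omega
      rw [Finset.card_insert_of_notMem d1, Finset.card_insert_of_notMem d2,
        Finset.card_insert_of_notMem d3, Finset.card_singleton]
    have h4 : 4 ≤ (A n).card := hcard ▸ Finset.card_le_card hss
    have := h1 n (by omega)
    omega
  · intro h2 n hn
    by_contra hc
    push_neg at hc
    have hcs : 1 < (((A n).erase (n-1)).erase 1).card := by
      have e1 := Finset.pred_card_le_card_erase (s := (A n).erase (n-1)) (a := 1)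
      have e2 := Finset.pred_card_le_card_erase (s := A n) (a := n-1)
      omega
    obtain ⟨a, has, b, hbs, hab⟩ := Finset.one_lt_card.mp hcs
    rw [Finset.mem_erase, Finset.mem_erase] at has hbs
    obtain ⟨ha1, han1, haA⟩ := has
    obtain ⟨hb1, hbn1, hbA⟩ := hbs
    obtain ⟨k, hk3, heqa, i, hai, hni⟩ := extract n a haA ha1 han1
    obtain ⟨l, hl3, heqb, j, hbj, hnj⟩ := extract n b hbA hb1 hbn1
    have haA' := haA; have hbA' := hbA
    simp only [A, Finset.mem_filter, Finset.mem_Ico] at haA' hbA'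
    have hbnd_a : 2 ≤ (a:ℤ) ∧ (a:ℤ) ≤ (n:ℤ) - 2 := by omega
    have hbnd_b : 2 ≤ (b:ℤ) ∧ (b:ℤ) ≤ (n:ℤ) - 2 := by omega
    have hkl : k ≠ l := by
      intro h
      rw [h] at heqa
      have h0 : ((a:ℤ) - b) * ((a:ℤ) + b - l*(n:ℤ)) = 0 := by
        linear_combination heqa - heqb
      rcases mul_eq_zero.mp h0 with h' | h'
      · exact hab (by omega)
      · nlinarith [mul_nonneg (by linarith : (0:ℤ) ≤ l - 3)
          (by linarith [hbnd_a.1, hbnd_a.2] : (0:ℤ) ≤ (n:ℤ))]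
    rcases lt_or_gt_of_ne hkl with h | h
    · exact h2 l k hk3 h (j+2) (i+2) (by omega) (by omega) (hnj.symm.trans hni)
    · exact h2 k l hl3 h (i+2) (j+2) (by omega) (by omega) (hni.symm.trans hnj)
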